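/- arXiv:1001.2363 — 2 statements merged into one kernel-verified Lean document; each statement's English description precedes it below -/
import Mathlib

section
/- Assume ‖P_Ω P_T‖ ≤ 1/2 and λ < 1. Suppose there exists a matrix W with P_T W = 0, ‖W‖ < 1/2, ‖P_Ω(UV* − λ·sgn(S₀) + W)‖_F ≤ λ/4, and ‖P_{Ω⊥}(UV* + W)‖_∞ < λ/2. Then the pair (L₀, S₀) is the unique optimal solution of the problem: minimize ‖L‖_* + λ‖S‖_1 over all pairs (L,S) with L + S = L₀ + S₀. -/
open Matrix BigOperators

noncomputable def frobNorm {m k : ℕ} (A : Matrix (Fin m) (Fin k) ℝ) : ℝ :=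
  Real.sqrt (∑ i, ∑ j, (A i j) ^ 2)

noncomputable def nuclearNorm {m k : ℕ} (A : Matrix (Fin m) (Fin k) ℝ) : ℝ :=
  ∑ i, Real.sqrt ((show (Aᵀ * A).IsHermitian by
    simpa [Matrix.conjTranspose_eq_transpose_of_trivial] using
      Matrix.isHermitian_conjTranspose_mul_self A).eigenvalues i)

def l1Norm {m k : ℕ} (A : Matrix (Fin m) (Fin k) ℝ) : ℝ :=
  ∑ i, ∑ j, |A i j|

noncomputable def linfNorm {m k : ℕ} (A : Matrix (Fin m) (Fin k) ℝ) : ℝ :=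
  ⨆ i, ⨆ j, |A i j|

noncomputable def specNorm {m k : ℕ} (A : Matrix (Fin m) (Fin k) ℝ) : ℝ :=
  ‖LinearMap.toContinuousLinearMap (Matrix.toEuclideanLin A)‖

def finner {m k : ℕ} (A B : Matrix (Fin m) (Fin k) ℝ) : ℝ :=
  ∑ i, ∑ j, A i j * B i j

noncomputable def projSet {n : ℕ} (Ω : Set (Fin n × Fin n)) (S : Matrix (Fin n) (Fin n) ℝ) :
    Matrix (Fin n) (Fin n) ℝ :=
  fun i j => Ω.indicator (fun p => S p.1 p.2) (i, j)

def suppSet {n : ℕ} (S : Matrix (Fin n) (Fin n) ℝ) : Set (Fin n × Fin n) :=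
  {p | S p.1 p.2 ≠ 0}

noncomputable def sgnMat {n : ℕ} (S : Matrix (Fin n) (Fin n) ℝ) : Matrix (Fin n) (Fin n) ℝ :=
  fun i j => Real.sign (S i j)

def Tspace {n r : ℕ} (U V : Matrix (Fin n) (Fin r) ℝ) : Set (Matrix (Fin n) (Fin n) ℝ) :=
  {X | ∃ Q R : Matrix (Fin n) (Fin r) ℝ, X = U * Qᵀ + R * Vᵀ}

def IsOrthProjOnto {n : ℕ} (P : Matrix (Fin n) (Fin n) ℝ →ₗ[ℝ] Matrix (Fin n) (Fin n) ℝ)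
    (T : Set (Matrix (Fin n) (Fin n) ℝ)) : Prop :=
  (∀ X, P X ∈ T) ∧ (∀ X ∈ T, P X = X) ∧ (∀ X Y, Y ∈ T → finner (X - P X) Y = 0)

noncomputable def pairFrob {n : ℕ} (X : Matrix (Fin n) (Fin n) ℝ × Matrix (Fin n) (Fin n) ℝ) : ℝ :=
  Real.sqrt (frobNorm X.1 ^ 2 + frobNorm X.2 ^ 2)

noncomputable def projGamma {n : ℕ} (X : Matrix (Fin n) (Fin n) ℝ × Matrix (Fin n) (Fin n) ℝ) :
    Matrix (Fin n) (Fin n) ℝ × Matrix (Fin n) (Fin n) ℝ :=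
  ((1/2 : ℝ) • (X.1 + X.2), (1/2 : ℝ) • (X.1 + X.2))

open scoped Classical

noncomputable def suppFinset {n : ℕ} (S : Matrix (Fin n) (Fin n) ℝ) : Finset (Fin n × Fin n) :=
  Finset.univ.filter (fun p => S p.1 p.2 ≠ 0)


/-!
Write `L = L₀ + H` and `S = S₀ - H`. If `G` is the polar factor of `P_{T⊥} H`, then
`U Vᵀ + G` has spectral norm at most one, so nuclear/spectral duality gives
`‖L‖_* ≥ ‖L₀‖_* + ⟨U Vᵀ, H⟩ + ‖P_{T⊥} H‖_*`; entrywise,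
`‖S‖₁ ≥ ‖S₀‖₁ - ⟨sgn S₀, H⟩ + ‖P_{Ω⊥} H‖₁`. The linear terms add up to
`⟨U Vᵀ - λ sgn S₀ + W, H⟩ - ⟨W, H⟩`. Splitting the first pairing along `Ω` and using
`‖P_Ω H‖_F ≤ ‖P_{Ω⊥} H‖₁ + 2 ‖P_{T⊥} H‖_*` (a consequence of `‖P_Ω P_T‖ ≤ 1/2`), the
certificate bounds leave the gain `(1 - ‖W‖ - λ/2) ‖P_{T⊥} H‖_* + (λ/4) ‖P_{Ω⊥} H‖₁`,
which is positive unless `H = 0`.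
-/

lemma mul_add_mul_pos {α β a b : ℝ} (hα : 0 < α) (hβ : 0 < β) (ha : 0 ≤ a) (hb : 0 ≤ b)
    (hab : 0 < a + b) : 0 < α * a + β * b := by
  nlinarith [mul_le_mul_of_nonneg_right (min_le_left α β) ha,
    mul_le_mul_of_nonneg_right (min_le_right α β) hb, mul_pos (lt_min hα hβ) hab]

section Frobenius
variable {m k : ℕ}

def flatEuclidean (A : Matrix (Fin m) (Fin k) ℝ) : EuclideanSpace ℝ (Fin m × Fin k) :=
  WithLp.toLp 2 fun p => A p.1 p.2

lemma finner_eq_inner (A B : Matrix (Fin m) (Fin k) ℝ) :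
    finner A B = inner ℝ (flatEuclidean A) (flatEuclidean B) := by
  simp [finner, flatEuclidean, EuclideanSpace.inner_toLp_toLp, dotProduct, Fintype.sum_prod_type,
    mul_comm]

lemma frobNorm_eq_norm (A : Matrix (Fin m) (Fin k) ℝ) : frobNorm A = ‖flatEuclidean A‖ := by
  simp [frobNorm, flatEuclidean, EuclideanSpace.norm_eq, Fintype.sum_prod_type]

lemma frobNorm_nonneg (A : Matrix (Fin m) (Fin k) ℝ) : 0 ≤ frobNorm A := Real.sqrt_nonneg _

lemma abs_finner_le (A B : Matrix (Fin m) (Fin k) ℝ) :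
    |finner A B| ≤ frobNorm A * frobNorm B := by
  rw [finner_eq_inner, frobNorm_eq_norm, frobNorm_eq_norm]
  exact abs_real_inner_le_norm _ _

lemma frobNorm_add_le (A B : Matrix (Fin m) (Fin k) ℝ) :
    frobNorm (A + B) ≤ frobNorm A + frobNorm B := by
  simp only [frobNorm_eq_norm]
  exact norm_add_le (flatEuclidean A) (flatEuclidean B)

lemma eq_zero_of_frobNorm_eq_zero {A : Matrix (Fin m) (Fin k) ℝ} (h : frobNorm A = 0) :
    A = 0 := by
  rw [frobNorm_eq_norm, norm_eq_zero] at h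
  ext i j
  simpa [flatEuclidean] using congrArg (fun x => x (i, j)) h

lemma finner_eq_trace (A B : Matrix (Fin m) (Fin k) ℝ) : finner A B = trace (Aᵀ * B) := by
  simp only [finner, trace, diag, mul_apply, transpose_apply]
  exact Finset.sum_comm

lemma finner_add_left (A B C : Matrix (Fin m) (Fin k) ℝ) :
    finner (A + B) C = finner A C + finner B C := by
  simp [finner, add_mul, Finset.sum_add_distrib]

lemma finner_add_right (A B C : Matrix (Fin m) (Fin k) ℝ) :
    finner A (B + C) = finner A B + finner A C := by
  simp [finner, mul_add, Finset.sum_add_distrib]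

lemma finner_sub_left (A B C : Matrix (Fin m) (Fin k) ℝ) :
    finner (A - B) C = finner A C - finner B C := by
  simp [finner, sub_mul, Finset.sum_sub_distrib]

lemma finner_smul_left (c : ℝ) (A B : Matrix (Fin m) (Fin k) ℝ) :
    finner (c • A) B = c * finner A B := by
  simp [finner, Finset.mul_sum, mul_assoc]

lemma frobNorm_sq (A : Matrix (Fin m) (Fin k) ℝ) : frobNorm A ^ 2 = trace (Aᵀ * A) := by
  rw [← finner_eq_trace, frobNorm, Real.sq_sqrt (by positivity)]
  simp [finner, sq]

lemma eq_zero_of_finner_self_eq_zero {A : Matrix (Fin m) (Fin k) ℝ} (h : finner A A = 0) :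
    A = 0 := by
  apply eq_zero_of_frobNorm_eq_zero
  rw [← sq_eq_zero_iff, frobNorm_sq, ← finner_eq_trace, h]

lemma finner_mul_left {r : ℕ} (X : Matrix (Fin m) (Fin k) ℝ) (U : Matrix (Fin m) (Fin r) ℝ)
    (M : Matrix (Fin r) (Fin k) ℝ) : finner X (U * M) = finner (Uᵀ * X) M := by
  rw [finner_eq_trace, finner_eq_trace, transpose_mul, transpose_transpose, Matrix.mul_assoc]

lemma finner_mul_right {r : ℕ} (X : Matrix (Fin m) (Fin k) ℝ) (M : Matrix (Fin m) (Fin r) ℝ)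
    (N : Matrix (Fin r) (Fin k) ℝ) : finner X (M * N) = finner (X * Nᵀ) M := by
  rw [finner_eq_trace, finner_eq_trace, transpose_mul, transpose_transpose, ← Matrix.mul_assoc,
    trace_mul_comm, Matrix.mul_assoc]

end Frobenius

section SpectralNorm
open scoped Matrix.Norms.L2Operator
variable {m k : ℕ}

lemma specNorm_eq_norm (A : Matrix (Fin m) (Fin k) ℝ) : specNorm A = ‖A‖ := rfl

lemma specNorm_le_one_of_isStarProjection {A : Matrix (Fin m) (Fin k) ℝ}
    (h : IsStarProjection (Aᵀ * A)) : specNorm A ≤ 1 := by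
  have hsq : ‖A‖ * ‖A‖ ≤ 1 := by
    rw [← l2_opNorm_conjTranspose_mul_self, conjTranspose_eq_transpose_of_trivial]
    exact h.norm_le
  rw [specNorm_eq_norm]
  nlinarith [norm_nonneg A]

lemma specNorm_le_one_of_transpose_mul_self_eq_one {A : Matrix (Fin m) (Fin k) ℝ}
    (h : Aᵀ * A = 1) : specNorm A ≤ 1 :=
  specNorm_le_one_of_isStarProjection (h ▸ IsStarProjection.one _)

lemma abs_dotProduct_mulVec_le (A : Matrix (Fin m) (Fin k) ℝ) (x : Fin m → ℝ) (y : Fin k → ℝ) :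
    |x ⬝ᵥ (A *ᵥ y)| ≤ ‖WithLp.toLp 2 x‖ * (specNorm A * ‖WithLp.toLp 2 y‖) := by
  have h := abs_real_inner_le_norm (WithLp.toLp 2 x) (WithLp.toLp 2 (A *ᵥ y))
  rw [EuclideanSpace.inner_toLp_toLp, star_trivial, dotProduct_comm] at h
  refine h.trans (mul_le_mul_of_nonneg_left ?_ (norm_nonneg _))
  exact A.l2_opNorm_mulVec (WithLp.toLp 2 y)

lemma norm_transpose_apply_le (A : Matrix (Fin m) (Fin k) ℝ) (i : Fin k) :
    ‖WithLp.toLp 2 (Aᵀ i)‖ ≤ specNorm A := by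
  have h := A.l2_opNorm_mulVec (PiLp.single 2 i (1 : ℝ))
  rwa [PiLp.norm_single, norm_one, mul_one, PiLp.ofLp_single, mulVec_single_one] at h

end SpectralNorm

section Entrywise
variable {m k : ℕ}

lemma abs_le_linfNorm (A : Matrix (Fin m) (Fin k) ℝ) (i : Fin m) (j : Fin k) :
    |A i j| ≤ linfNorm A :=
  (le_ciSup (Set.finite_range _).bddAbove j).trans
    (le_ciSup (f := fun i => ⨆ j, |A i j|) (Set.finite_range _).bddAbove i)

lemma linfNorm_nonneg (A : Matrix (Fin m) (Fin k) ℝ) : 0 ≤ linfNorm A :=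
  Real.iSup_nonneg fun _ => Real.iSup_nonneg fun _ => abs_nonneg _

lemma l1Norm_nonneg (A : Matrix (Fin m) (Fin k) ℝ) : 0 ≤ l1Norm A :=
  Finset.sum_nonneg fun _ _ => Finset.sum_nonneg fun _ _ => abs_nonneg _

lemma abs_finner_le_linfNorm_mul_l1Norm (A B : Matrix (Fin m) (Fin k) ℝ) :
    |finner A B| ≤ linfNorm A * l1Norm B := by
  rw [finner, l1Norm, Finset.mul_sum]
  refine (Finset.abs_sum_le_sum_abs _ _).trans (Finset.sum_le_sum fun i _ => ?_)
  rw [Finset.mul_sum]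
  refine (Finset.abs_sum_le_sum_abs _ _).trans (Finset.sum_le_sum fun j _ => ?_)
  rw [abs_mul]
  exact mul_le_mul_of_nonneg_right (abs_le_linfNorm A i j) (abs_nonneg _)

lemma frobNorm_le_l1Norm (A : Matrix (Fin m) (Fin k) ℝ) : frobNorm A ≤ l1Norm A := by
  have hsq : ∑ i, ∑ j, A i j ^ 2 ≤ l1Norm A ^ 2 :=
    calc ∑ i, ∑ j, A i j ^ 2 ≤ ∑ i, (∑ j, |A i j|) ^ 2 := Finset.sum_le_sum fun i _ => by
          simpa only [sq_abs] using
            Finset.sum_sq_le_sq_sum_of_nonneg fun j _ => abs_nonneg (A i j)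
      _ ≤ l1Norm A ^ 2 := Finset.sum_sq_le_sq_sum_of_nonneg fun i _ =>
          Finset.sum_nonneg fun j _ => abs_nonneg _
  exact (Real.sqrt_le_left (l1Norm_nonneg A)).mpr hsq
end Entrywise

section Factored
variable {m k r : ℕ}

lemma finner_mul_diagonal_mul (Y : Matrix (Fin m) (Fin k) ℝ) (U : Matrix (Fin m) (Fin r) ℝ)
    (σ : Fin r → ℝ) (V : Matrix (Fin k) (Fin r) ℝ) :
    finner Y (U * diagonal σ * Vᵀ) = ∑ i, σ i * (Uᵀ i ⬝ᵥ (Y *ᵥ Vᵀ i)) := by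
  simp only [finner, mul_apply, diagonal_apply, transpose_apply, dotProduct, mulVec,
    mul_ite, mul_zero, Finset.sum_ite_eq', Finset.mem_univ, if_true, Finset.mul_sum]
  conv_rhs => rw [Finset.sum_comm]
  refine Finset.sum_congr rfl fun a _ => ?_
  conv_rhs => rw [Finset.sum_comm]
  refine Finset.sum_congr rfl fun b _ => Finset.sum_congr rfl fun i _ => ?_
  ring

lemma finner_mul_diagonal_mul_le (Y : Matrix (Fin m) (Fin k) ℝ) {U : Matrix (Fin m) (Fin r) ℝ}
    {σ : Fin r → ℝ} {V : Matrix (Fin k) (Fin r) ℝ} (hU : specNorm U ≤ 1) (hV : specNorm V ≤ 1)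
    (hσ : ∀ i, 0 ≤ σ i) : finner Y (U * diagonal σ * Vᵀ) ≤ specNorm Y * ∑ i, σ i := by
  rw [finner_mul_diagonal_mul, Finset.mul_sum]
  refine Finset.sum_le_sum fun i _ => ?_
  have hY : 0 ≤ specNorm Y := norm_nonneg _
  calc σ i * (Uᵀ i ⬝ᵥ (Y *ᵥ Vᵀ i))
      ≤ σ i * (‖WithLp.toLp 2 (Uᵀ i)‖ * (specNorm Y * ‖WithLp.toLp 2 (Vᵀ i)‖)) :=
        mul_le_mul_of_nonneg_left ((le_abs_self _).trans (abs_dotProduct_mulVec_le _ _ _)) (hσ i)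
    _ ≤ σ i * (1 * (specNorm Y * 1)) := by
        gcongr
        · exact hσ i
        · exact (norm_transpose_apply_le U i).trans hU
        · exact (norm_transpose_apply_le V i).trans hV
    _ = specNorm Y * σ i := by ring

end Factored

section SingularValueDecomposition
variable {m k : ℕ}

lemma mul_diagonal_inv_mul_self_eq {Y : Matrix (Fin m) (Fin k) ℝ} {c : Fin k → ℝ}
    (h : Yᵀ * Y = diagonal (c * c)) : Y * diagonal (c⁻¹ * c) = Y := by
  ext a i
  rw [mul_diagonal, Pi.mul_apply, Pi.inv_apply]
  by_cases hc : c i = 0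
  · have hcol : ∑ b, Y b i * Y b i = 0 := by
      simpa [mul_apply, hc] using congrFun (congrFun h i) i
    have := (Finset.sum_eq_zero_iff_of_nonneg fun b _ => mul_self_nonneg (Y b i)).mp hcol a
      (Finset.mem_univ a)
    simp [mul_self_eq_zero.mp this]
  · rw [inv_mul_cancel₀ hc, mul_one]

lemma isStarProjection_diagonal_inv_mul_self (c : Fin k → ℝ) :
    IsStarProjection (diagonal (c⁻¹ * c)) where
  isSelfAdjoint := isHermitian_diagonal _
  isIdempotentElem := by
    rw [IsIdempotentElem, diagonal_mul_diagonal]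
    congr 1
    ext i
    by_cases hc : c i = 0 <;> simp [hc]

lemma isStarProjection_mul_mul_transpose {Q : Matrix (Fin m) (Fin k) ℝ} (hQ : Qᵀ * Q = 1)
    {P : Matrix (Fin k) (Fin k) ℝ} (hP : IsStarProjection P) : IsStarProjection (Q * P * Qᵀ) where
  isSelfAdjoint := by
    have hPt : Pᵀ = P := by
      rw [← conjTranspose_eq_transpose_of_trivial]
      exact hP.isSelfAdjoint
    simp only [IsSelfAdjoint, star_eq_conjTranspose, conjTranspose_eq_transpose_of_trivial,
      transpose_mul, transpose_transpose, hPt, Matrix.mul_assoc]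
  isIdempotentElem := by
    rw [IsIdempotentElem]
    calc Q * P * Qᵀ * (Q * P * Qᵀ) = Q * (P * (Qᵀ * Q) * P) * Qᵀ := by
          simp only [Matrix.mul_assoc]
      _ = Q * P * Qᵀ := by rw [hQ, Matrix.mul_one, hP.isIdempotentElem.eq, Matrix.mul_assoc]

variable (X : Matrix (Fin m) (Fin k) ℝ)

lemma isHermitian_transpose_mul_self : (Xᵀ * X).IsHermitian := by
  simpa [conjTranspose_eq_transpose_of_trivial] using isHermitian_conjTranspose_mul_self X

noncomputable def rightSingularVectors : Matrix (Fin k) (Fin k) ℝ :=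
  (isHermitian_transpose_mul_self X).eigenvectorUnitary

noncomputable def singularValues (i : Fin k) : ℝ :=
  √((isHermitian_transpose_mul_self X).eigenvalues i)

-- Columns with singular value zero are zero, since `0⁻¹ = 0`.
noncomputable def leftSingularVectors : Matrix (Fin m) (Fin k) ℝ :=
  X * rightSingularVectors X * diagonal (singularValues X)⁻¹

noncomputable def polarFactor : Matrix (Fin m) (Fin k) ℝ :=
  leftSingularVectors X * (rightSingularVectors X)ᵀ

lemma singularValues_nonneg (i : Fin k) : 0 ≤ singularValues X i := Real.sqrt_nonneg _

lemma nuclearNorm_eq_sum_singularValues : nuclearNorm X = ∑ i, singularValues X i := rfl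

lemma nuclearNorm_nonneg : 0 ≤ nuclearNorm X :=
  Finset.sum_nonneg fun i _ => singularValues_nonneg X i

lemma rightSingularVectors_transpose_mul_self :
    (rightSingularVectors X)ᵀ * rightSingularVectors X = 1 := by
  rw [← conjTranspose_eq_transpose_of_trivial]
  exact Unitary.star_mul_self_of_mem (isHermitian_transpose_mul_self X).eigenvectorUnitary.2

lemma rightSingularVectors_mul_transpose_self :
    rightSingularVectors X * (rightSingularVectors X)ᵀ = 1 := by
  rw [← conjTranspose_eq_transpose_of_trivial]
  exact Unitary.mul_star_self_of_mem (isHermitian_transpose_mul_self X).eigenvectorUnitary.2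

lemma transpose_mul_self_eq_conj_diagonal :
    Xᵀ * X = rightSingularVectors X * diagonal (singularValues X * singularValues X) *
      (rightSingularVectors X)ᵀ := by
  have hsq : singularValues X * singularValues X =
      (isHermitian_transpose_mul_self X).eigenvalues :=
    funext fun i => Real.mul_self_sqrt (eigenvalues_conjTranspose_mul_self_nonneg X i)
  rw [hsq, rightSingularVectors]
  conv_lhs => rw [(isHermitian_transpose_mul_self X).spectral_theorem]
  simp [star_eq_conjTranspose, conjTranspose_eq_transpose_of_trivial]

lemma mul_rightSingularVectors_transpose_mul_self :
    (X * rightSingularVectors X)ᵀ * (X * rightSingularVectors X) =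
      diagonal (singularValues X * singularValues X) := by
  rw [transpose_mul, Matrix.mul_assoc, ← Matrix.mul_assoc Xᵀ, transpose_mul_self_eq_conj_diagonal]
  simp only [Matrix.mul_assoc, rightSingularVectors_transpose_mul_self, Matrix.mul_one]
  rw [← Matrix.mul_assoc, rightSingularVectors_transpose_mul_self, Matrix.one_mul]

lemma eq_leftSingularVectors_mul_diagonal_mul :
    X = leftSingularVectors X * diagonal (singularValues X) * (rightSingularVectors X)ᵀ := by
  rw [leftSingularVectors, Matrix.mul_assoc (X * _) (diagonal _), diagonal_mul_diagonal,
    ← Pi.mul_def, mul_diagonal_inv_mul_self_eq (mul_rightSingularVectors_transpose_mul_self X),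
    Matrix.mul_assoc, rightSingularVectors_mul_transpose_self, Matrix.mul_one]

lemma leftSingularVectors_transpose_mul_self :
    (leftSingularVectors X)ᵀ * leftSingularVectors X =
      diagonal ((singularValues X)⁻¹ * singularValues X) := by
  rw [leftSingularVectors, transpose_mul, diagonal_transpose, Matrix.mul_assoc,
    ← Matrix.mul_assoc (X * _)ᵀ, mul_rightSingularVectors_transpose_mul_self, diagonal_mul_diagonal,
    diagonal_mul_diagonal]
  congr 1
  ext i
  by_cases hs : singularValues X i = 0 <;> simp [hs]

lemma specNorm_leftSingularVectors_le_one : specNorm (leftSingularVectors X) ≤ 1 := by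
  apply specNorm_le_one_of_isStarProjection
  rw [leftSingularVectors_transpose_mul_self]
  exact isStarProjection_diagonal_inv_mul_self _

lemma specNorm_rightSingularVectors_le_one : specNorm (rightSingularVectors X) ≤ 1 :=
  specNorm_le_one_of_transpose_mul_self_eq_one (rightSingularVectors_transpose_mul_self X)

lemma finner_le_specNorm_mul_nuclearNorm (Y : Matrix (Fin m) (Fin k) ℝ) :
    finner Y X ≤ specNorm Y * nuclearNorm X := by
  conv_lhs => rw [eq_leftSingularVectors_mul_diagonal_mul X]
  exact finner_mul_diagonal_mul_le Y (specNorm_leftSingularVectors_le_one X)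
    (specNorm_rightSingularVectors_le_one X) (singularValues_nonneg X)

lemma frobNorm_le_nuclearNorm : frobNorm X ≤ nuclearNorm X := by
  have hsq : frobNorm X ^ 2 ≤ nuclearNorm X ^ 2 := by
    rw [frobNorm_sq, transpose_mul_self_eq_conj_diagonal, trace_mul_comm, ← Matrix.mul_assoc,
      rightSingularVectors_transpose_mul_self, Matrix.one_mul, trace_diagonal,
      nuclearNorm_eq_sum_singularValues]
    simpa [sq] using Finset.sum_sq_le_sq_sum_of_nonneg fun i _ => singularValues_nonneg X i
  exact (pow_le_pow_iff_left₀ (frobNorm_nonneg X)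
    (Finset.sum_nonneg fun i _ => singularValues_nonneg X i) two_ne_zero).mp hsq

lemma isStarProjection_polarFactor_transpose_mul_self :
    IsStarProjection ((polarFactor X)ᵀ * polarFactor X) := by
  have h : (polarFactor X)ᵀ * polarFactor X = rightSingularVectors X *
      ((leftSingularVectors X)ᵀ * leftSingularVectors X) * (rightSingularVectors X)ᵀ := by
    simp only [polarFactor, transpose_mul, transpose_transpose, Matrix.mul_assoc]
  rw [h, leftSingularVectors_transpose_mul_self]
  simpa using isStarProjection_mul_mul_transpose (Q := rightSingularVectors X)
    (rightSingularVectors_transpose_mul_self X) (isStarProjection_diagonal_inv_mul_self _)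

lemma specNorm_polarFactor_le_one : specNorm (polarFactor X) ≤ 1 :=
  specNorm_le_one_of_isStarProjection (isStarProjection_polarFactor_transpose_mul_self X)

lemma finner_polarFactor_self : finner (polarFactor X) X = nuclearNorm X := by
  conv_lhs => arg 2; rw [eq_leftSingularVectors_mul_diagonal_mul X]
  rw [finner_eq_trace, polarFactor, transpose_mul, transpose_transpose, Matrix.mul_assoc,
    trace_mul_comm]
  simp only [Matrix.mul_assoc, rightSingularVectors_transpose_mul_self, Matrix.mul_one]
  rw [← Matrix.mul_assoc, leftSingularVectors_transpose_mul_self, diagonal_mul_diagonal,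
    trace_diagonal, nuclearNorm_eq_sum_singularValues]
  refine Finset.sum_congr rfl fun i _ => ?_
  by_cases hs : singularValues X i = 0 <;> simp [hs]

-- Hence every left or right annihilator of `X` also annihilates its polar factor.
lemma exists_polarFactor_eq_mul :
    ∃ C : Matrix (Fin k) (Fin k) ℝ, polarFactor X = X * C * (Xᵀ * X) := by
  refine ⟨rightSingularVectors X * diagonal ((singularValues X)⁻¹ ^ 3) *
    (rightSingularVectors X)ᵀ, ?_⟩
  rw [transpose_mul_self_eq_conj_diagonal, polarFactor, leftSingularVectors]
  simp only [Matrix.mul_assoc]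
  rw [← Matrix.mul_assoc (rightSingularVectors X)ᵀ, rightSingularVectors_transpose_mul_self,
    Matrix.one_mul, ← Matrix.mul_assoc (diagonal _), diagonal_mul_diagonal]
  congr 4
  ext i
  by_cases hs : singularValues X i = 0 <;> simp [hs]
  field_simp

end SingularValueDecomposition

section Nuclear
variable {m k r : ℕ}

lemma nuclearNorm_mul_diagonal_mul_le {U : Matrix (Fin m) (Fin r) ℝ} {σ : Fin r → ℝ}
    {V : Matrix (Fin k) (Fin r) ℝ} (hU : specNorm U ≤ 1) (hV : specNorm V ≤ 1)
    (hσ : ∀ i, 0 ≤ σ i) : nuclearNorm (U * diagonal σ * Vᵀ) ≤ ∑ i, σ i := by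
  set X := U * diagonal σ * Vᵀ
  calc nuclearNorm X = finner (polarFactor X) X := (finner_polarFactor_self X).symm
    _ ≤ specNorm (polarFactor X) * ∑ i, σ i := finner_mul_diagonal_mul_le _ hU hV hσ
    _ ≤ ∑ i, σ i := mul_le_of_le_one_left (Finset.sum_nonneg fun i _ => hσ i)
        (specNorm_polarFactor_le_one X)

lemma finner_mul_transpose_mul_diagonal_mul {U : Matrix (Fin m) (Fin r) ℝ}
    {V : Matrix (Fin k) (Fin r) ℝ} (hU : Uᵀ * U = 1) (hV : Vᵀ * V = 1) (σ : Fin r → ℝ) :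
    finner (U * Vᵀ) (U * diagonal σ * Vᵀ) = ∑ i, σ i := by
  rw [finner_eq_trace, transpose_mul, transpose_transpose, Matrix.mul_assoc, trace_mul_comm]
  simp only [Matrix.mul_assoc, hV, Matrix.mul_one]
  rw [← Matrix.mul_assoc, hU, Matrix.one_mul, trace_diagonal]

lemma specNorm_mul_transpose_add_le_one {U : Matrix (Fin m) (Fin r) ℝ}
    {V : Matrix (Fin k) (Fin r) ℝ} {G : Matrix (Fin m) (Fin k) ℝ} (hU : Uᵀ * U = 1)
    (hV : Vᵀ * V = 1) (hUG : Uᵀ * G = 0) (hGV : G * V = 0)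
    (hG : IsStarProjection (Gᵀ * G)) : specNorm (U * Vᵀ + G) ≤ 1 := by
  have hGU : Gᵀ * U = 0 := by rw [← transpose_transpose U, ← transpose_mul, hUG, transpose_zero]
  have hVG : Vᵀ * Gᵀ = 0 := by rw [← transpose_mul, hGV, transpose_zero]
  have hsq : (U * Vᵀ + G)ᵀ * (U * Vᵀ + G) = V * Vᵀ + Gᵀ * G := by
    simp only [transpose_add, transpose_mul, transpose_transpose, Matrix.add_mul, Matrix.mul_add,
      Matrix.mul_assoc, hUG, Matrix.mul_zero]
    rw [← Matrix.mul_assoc Uᵀ, hU, Matrix.one_mul, ← Matrix.mul_assoc Gᵀ, hGU, Matrix.zero_mul,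
      add_zero, zero_add]
  have hVV : IsStarProjection (V * Vᵀ) := by
    simpa using isStarProjection_mul_mul_transpose hV (IsStarProjection.one _)
  apply specNorm_le_one_of_isStarProjection
  rw [hsq]
  refine hVV.add hG ?_
  rw [Matrix.mul_assoc, ← Matrix.mul_assoc Vᵀ, hVG, Matrix.zero_mul, Matrix.mul_zero]

end Nuclear

section Tangent
variable {n r : ℕ} {U V : Matrix (Fin n) (Fin r) ℝ}

lemma mul_diagonal_mul_transpose_mem_Tspace (σ : Fin r → ℝ) :
    U * diagonal σ * Vᵀ ∈ Tspace U V :=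
  ⟨V * diagonal σ, 0, by
    rw [transpose_mul, diagonal_transpose, Matrix.zero_mul, add_zero, Matrix.mul_assoc]⟩

lemma finner_eq_zero_of_mem_Tspace {X Y : Matrix (Fin n) (Fin n) ℝ} (hUX : Uᵀ * X = 0)
    (hXV : X * V = 0) (hY : Y ∈ Tspace U V) : finner X Y = 0 := by
  obtain ⟨Q, R, rfl⟩ := hY
  rw [finner_add_right, finner_mul_left, finner_mul_right, transpose_transpose, hUX, hXV]
  simp [finner]

lemma mul_eq_zero_of_forall_finner_eq_zero {X : Matrix (Fin n) (Fin n) ℝ}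
    (h : ∀ Y ∈ Tspace U V, finner X Y = 0) : Uᵀ * X = 0 ∧ X * V = 0 := by
  constructor
  · apply eq_zero_of_finner_self_eq_zero
    rw [← finner_mul_left]
    exact h _ ⟨(Uᵀ * X)ᵀ, 0, by rw [transpose_transpose, Matrix.zero_mul, add_zero]⟩
  · apply eq_zero_of_finner_self_eq_zero
    have := h _ ⟨0, X * V, by rw [transpose_zero, Matrix.mul_zero, zero_add]⟩
    rwa [finner_mul_right, transpose_transpose] at this

lemma le_nuclearNorm_add (hU : Uᵀ * U = 1) (hV : Vᵀ * V = 1) {σ : Fin r → ℝ}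
    (hσ : ∀ i, 0 ≤ σ i) {H X : Matrix (Fin n) (Fin n) ℝ}
    (hX : ∀ Y ∈ Tspace U V, finner X Y = 0) (hHX : H - X ∈ Tspace U V) :
    nuclearNorm (U * diagonal σ * Vᵀ) + finner (U * Vᵀ) H + nuclearNorm X ≤
      nuclearNorm (U * diagonal σ * Vᵀ + H) := by
  obtain ⟨hUX, hXV⟩ := mul_eq_zero_of_forall_finner_eq_zero hX
  obtain ⟨C, hC⟩ := exists_polarFactor_eq_mul X
  set G := polarFactor X
  have hUG : Uᵀ * G = 0 := by
    rw [hC]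
    simp only [← Matrix.mul_assoc, hUX, Matrix.zero_mul]
  have hGV : G * V = 0 := by
    rw [hC]
    simp only [Matrix.mul_assoc, hXV, Matrix.mul_zero]
  have hGT : ∀ Y ∈ Tspace U V, finner G Y = 0 := fun Y hY =>
    finner_eq_zero_of_mem_Tspace hUG hGV hY
  have hGH : finner G H = nuclearNorm X := by
    rw [show H = X + (H - X) by abel, finner_add_right, finner_polarFactor_self, hGT _ hHX,
      add_zero]
  set L0 := U * diagonal σ * Vᵀ
  calc nuclearNorm L0 + finner (U * Vᵀ) H + nuclearNorm X
      ≤ ∑ i, σ i + finner (U * Vᵀ) H + nuclearNorm X := by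
        gcongr
        exact nuclearNorm_mul_diagonal_mul_le (specNorm_le_one_of_transpose_mul_self_eq_one hU)
          (specNorm_le_one_of_transpose_mul_self_eq_one hV) hσ
    _ = finner (U * Vᵀ + G) (L0 + H) := by
        rw [finner_add_left, finner_add_right, finner_add_right,
          finner_mul_transpose_mul_diagonal_mul hU hV,
          hGT _ (mul_diagonal_mul_transpose_mem_Tspace σ), hGH]
        ring
    _ ≤ specNorm (U * Vᵀ + G) * nuclearNorm (L0 + H) := finner_le_specNorm_mul_nuclearNorm _ _
    _ ≤ nuclearNorm (L0 + H) := mul_le_of_le_one_left (nuclearNorm_nonneg _)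
        (specNorm_mul_transpose_add_le_one hU hV hUG hGV
          (isStarProjection_polarFactor_transpose_mul_self X))

lemma finner_le_specNorm_mul_nuclearNorm_sub
    {P : Matrix (Fin n) (Fin n) ℝ →ₗ[ℝ] Matrix (Fin n) (Fin n) ℝ}
    (hP : IsOrthProjOnto P (Tspace U V)) {W : Matrix (Fin n) (Fin n) ℝ} (hW : P W = 0)
    (H : Matrix (Fin n) (Fin n) ℝ) : finner W H ≤ specNorm W * nuclearNorm (H - P H) := by
  have hWP : finner W (P H) = 0 := by simpa [hW] using hP.2.2 W (P H) (hP.1 H)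
  rw [← sub_add_cancel H (P H), finner_add_right, hWP, add_zero, sub_add_cancel]
  exact finner_le_specNorm_mul_nuclearNorm _ W

end Tangent

section Support
variable {n : ℕ}

lemma projSet_apply (Ω : Set (Fin n × Fin n)) (A : Matrix (Fin n) (Fin n) ℝ) (i j : Fin n) :
    projSet Ω A i j = if (i, j) ∈ Ω then A i j else 0 :=
  Set.indicator_apply _ _ _

lemma projSet_add (Ω : Set (Fin n × Fin n)) (A B : Matrix (Fin n) (Fin n) ℝ) :
    projSet Ω (A + B) = projSet Ω A + projSet Ω B := by
  ext i j
  simp only [projSet_apply, Matrix.add_apply]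
  split_ifs <;> simp

lemma finner_eq_finner_projSet_add (Ω : Set (Fin n × Fin n)) (A B : Matrix (Fin n) (Fin n) ℝ) :
    finner A B =
      finner (projSet Ω A) (projSet Ω B) + finner (A - projSet Ω A) (B - projSet Ω B) := by
  simp only [finner, ← Finset.sum_add_distrib, Matrix.sub_apply, projSet_apply]
  refine Finset.sum_congr rfl fun i _ => Finset.sum_congr rfl fun j _ => ?_
  split_ifs <;> simp

lemma frobNorm_projSet_le (Ω : Set (Fin n × Fin n)) (A : Matrix (Fin n) (Fin n) ℝ) :
    frobNorm (projSet Ω A) ≤ frobNorm A := by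
  refine Real.sqrt_le_sqrt (Finset.sum_le_sum fun i _ => Finset.sum_le_sum fun j _ => ?_)
  rw [projSet_apply]
  split_ifs <;> simp [sq_nonneg]

lemma frobNorm_le_frobNorm_projSet_add (Ω : Set (Fin n × Fin n))
    (H : Matrix (Fin n) (Fin n) ℝ) :
    frobNorm H ≤ frobNorm (projSet Ω H) + frobNorm (H - projSet Ω H) := by
  simpa using frobNorm_add_le (projSet Ω H) (H - projSet Ω H)

lemma neg_le_finner_of_frobNorm_projSet_le {Ω : Set (Fin n × Fin n)}
    {D : Matrix (Fin n) (Fin n) ℝ} {ε c : ℝ} (hD : frobNorm (projSet Ω D) ≤ ε)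
    (hc : linfNorm (D - projSet Ω D) ≤ c) (H : Matrix (Fin n) (Fin n) ℝ) :
    -(ε * frobNorm (projSet Ω H)) - c * l1Norm (H - projSet Ω H) ≤ finner D H := by
  have hΩ := abs_finner_le (projSet Ω D) (projSet Ω H)
  have hΩc := abs_finner_le_linfNorm_mul_l1Norm (D - projSet Ω D) (H - projSet Ω H)
  have h1 : frobNorm (projSet Ω D) * frobNorm (projSet Ω H) ≤ ε * frobNorm (projSet Ω H) :=
    mul_le_mul_of_nonneg_right hD (frobNorm_nonneg _)
  have h2 : linfNorm (D - projSet Ω D) * l1Norm (H - projSet Ω H) ≤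
      c * l1Norm (H - projSet Ω H) :=
    mul_le_mul_of_nonneg_right hc (l1Norm_nonneg _)
  rw [finner_eq_finner_projSet_add Ω]
  linarith [neg_abs_le (finner (projSet Ω D) (projSet Ω H)),
    neg_abs_le (finner (D - projSet Ω D) (H - projSet Ω H))]

lemma frobNorm_projSet_le_of_forall_frobNorm_projSet_le (Ω : Set (Fin n × Fin n))
    (P : Matrix (Fin n) (Fin n) ℝ → Matrix (Fin n) (Fin n) ℝ)
    (hP : ∀ X, frobNorm (projSet Ω (P X)) ≤ 1 / 2 * frobNorm X) (H : Matrix (Fin n) (Fin n) ℝ) :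
    frobNorm (projSet Ω H) ≤ frobNorm (H - projSet Ω H) + 2 * frobNorm (H - P H) := by
  have hΩ := frobNorm_le_frobNorm_projSet_add Ω H
  have hP' : frobNorm (projSet Ω H) ≤ 1 / 2 * frobNorm H + frobNorm (H - P H) := by
    calc frobNorm (projSet Ω H) = frobNorm (projSet Ω (P H) + projSet Ω (H - P H)) := by
          rw [← projSet_add, add_sub_cancel]
      _ ≤ _ := (frobNorm_add_le _ _).trans (add_le_add (hP H) (frobNorm_projSet_le Ω _))
  linarith

lemma abs_sub_sign_mul_add_le (s h : ℝ) :
    |s| - Real.sign s * h + (if s ≠ 0 then 0 else |h|) ≤ |s - h| := by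
  rcases lt_trichotomy s 0 with hs | rfl | hs
  · rw [Real.sign_of_neg hs, abs_of_neg hs, if_pos hs.ne]
    linarith [neg_le_abs (s - h)]
  · simp
  · rw [Real.sign_of_pos hs, abs_of_pos hs, if_pos hs.ne']
    linarith [le_abs_self (s - h)]

lemma le_l1Norm_sub (S H : Matrix (Fin n) (Fin n) ℝ) :
    l1Norm S - finner (sgnMat S) H + l1Norm (H - projSet (suppSet S) H) ≤ l1Norm (S - H) := by
  simp only [l1Norm, finner, ← Finset.sum_sub_distrib, ← Finset.sum_add_distrib]
  refine Finset.sum_le_sum fun i _ => Finset.sum_le_sum fun j _ => ?_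
  have hoff : |(H - projSet (suppSet S) H) i j| = if S i j ≠ 0 then 0 else |H i j| := by
    simp only [Matrix.sub_apply, projSet_apply, suppSet, Set.mem_ofPred_eq]
    split_ifs <;> simp
  rw [hoff, Matrix.sub_apply]
  exact abs_sub_sign_mul_add_le (S i j) (H i j)

lemma sub_projSet_suppSet_sub_smul_sgnMat_add (S A B : Matrix (Fin n) (Fin n) ℝ) (c : ℝ) :
    (A - c • sgnMat S + B) - projSet (suppSet S) (A - c • sgnMat S + B) =
      (A + B) - projSet (suppSet S) (A + B) := by
  ext i j
  simp only [Matrix.sub_apply, Matrix.add_apply, Matrix.smul_apply, projSet_apply, suppSet,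
    Set.mem_ofPred_eq, sgnMat]
  split_ifs with h
  · simp
  · simp [not_not.mp h]

end Support

theorem stmt2_general {n r : ℕ} (L0 S0 : Matrix (Fin n) (Fin n) ℝ)
    (U V : Matrix (Fin n) (Fin r) ℝ) (σ : Fin r → ℝ)
    -- compact SVD of L₀
    (hU : Uᵀ * U = 1) (hV : Vᵀ * V = 1) (hσ : ∀ i, 0 < σ i)
    (hSVD : L0 = U * Matrix.diagonal σ * Vᵀ)
    -- P_T is the orthogonal projection onto T
    (PT : Matrix (Fin n) (Fin n) ℝ →ₗ[ℝ] Matrix (Fin n) (Fin n) ℝ)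
    (hPT : IsOrthProjOnto PT (Tspace U V))
    (lam : ℝ) (hlam : lam < 1)
    -- ‖P_Ω P_T‖ ≤ 1/2
    (hop : ∀ X : Matrix (Fin n) (Fin n) ℝ,
      frobNorm (projSet (suppSet S0) (PT X)) ≤ (1 / 2) * frobNorm X)
    -- the dual certificate W
    (W : Matrix (Fin n) (Fin n) ℝ)
    (hW1 : PT W = 0) (hW2 : specNorm W < 1 / 2)
    (hW3 : frobNorm (projSet (suppSet S0) (U * Vᵀ - lam • sgnMat S0 + W)) ≤ lam / 4)
    (hW4 : linfNorm ((U * Vᵀ + W) - projSet (suppSet S0) (U * Vᵀ + W)) < lam / 2) :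
    ∀ L S : Matrix (Fin n) (Fin n) ℝ, L + S = L0 + S0 → (L, S) ≠ (L0, S0) →
      nuclearNorm L0 + lam * l1Norm S0 < nuclearNorm L + lam * l1Norm S := by
  intro L S hLS hne
  set Ω := suppSet S0
  set H := L - L0
  have hL : L = L0 + H := (add_sub_cancel L0 L).symm
  have hS : S = S0 - H := by rw [sub_sub_eq_add_sub, add_comm S0, ← hLS]; abel
  have hH : H ≠ 0 := fun h => hne (by rw [hL, hS, h, add_zero, sub_zero])
  set a := nuclearNorm (H - PT H)
  set b := l1Norm (H - projSet Ω H)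
  have hnuc : nuclearNorm L0 + finner (U * Vᵀ) H + a ≤ nuclearNorm L := by
    rw [hL, hSVD]
    exact le_nuclearNorm_add hU hV (fun i => (hσ i).le) (fun Y hY => hPT.2.2 H Y hY)
      ((sub_sub_cancel H (PT H)).symm ▸ hPT.1 H)
  have hl1 : l1Norm S0 - finner (sgnMat S0) H + b ≤ l1Norm S := hS ▸ le_l1Norm_sub S0 H
  have hWH : finner W H ≤ specNorm W * a := finner_le_specNorm_mul_nuclearNorm_sub hPT hW1 H
  have hDH := neg_le_finner_of_frobNorm_projSet_le hW3
    (sub_projSet_suppSet_sub_smul_sgnMat_add S0 (U * Vᵀ) W lam ▸ hW4.le) H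
  rw [finner_add_left, finner_sub_left, finner_smul_left] at hDH
  have hΩH : frobNorm (projSet Ω H) ≤ b + 2 * a := by
    linarith [frobNorm_projSet_le_of_forall_frobNorm_projSet_le Ω PT hop H,
      frobNorm_le_l1Norm (H - projSet Ω H), frobNorm_le_nuclearNorm (H - PT H)]
  have hab : 0 < a + b := by
    linarith [frobNorm_le_frobNorm_projSet_add Ω H, frobNorm_le_l1Norm (H - projSet Ω H),
      (frobNorm_nonneg H).lt_of_ne' (mt eq_zero_of_frobNorm_eq_zero hH)]
  have hlam0 : 0 < lam := by linarith [linfNorm_nonneg (U * Vᵀ + W - projSet Ω (U * Vᵀ + W))]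
  have hgain := mul_add_mul_pos (by linarith : 0 < 1 - specNorm W - lam / 2)
    (by linarith : 0 < lam / 4) (nuclearNorm_nonneg _) (l1Norm_nonneg _) hab
  nlinarith [mul_le_mul_of_nonneg_left hl1 hlam0.le, mul_le_mul_of_nonneg_left hΩH hlam0.le]

/-- Lemma 2.5: dual certificate implies exact recovery.
Assume ‖P_Ω P_T‖ ≤ 1/2 and λ < 1. If there exists W with P_T W = 0, ‖W‖ < 1/2,
‖P_Ω(UV* − λ sgn(S₀) + W)‖_F ≤ λ/4 and ‖P_{Ω⊥}(UV* + W)‖_∞ < λ/2, then (L₀, S₀) is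
the unique optimal solution of min ‖L‖_* + λ‖S‖₁ s.t. L + S = L₀ + S₀. -/
theorem stmt2 {n r : ℕ} (L0 S0 : Matrix (Fin n) (Fin n) ℝ)
    (U V : Matrix (Fin n) (Fin r) ℝ) (σ : Fin r → ℝ)
    -- compact SVD of L₀
    (hU : Uᵀ * U = 1) (hV : Vᵀ * V = 1) (hσ : ∀ i, 0 < σ i)
    (hSVD : L0 = U * Matrix.diagonal σ * Vᵀ) (hrank : L0.rank = r)
    -- P_T is the orthogonal projection onto T
    (PT : Matrix (Fin n) (Fin n) ℝ →ₗ[ℝ] Matrix (Fin n) (Fin n) ℝ)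
    (hPT : IsOrthProjOnto PT (Tspace U V))
    (lam : ℝ) (hlam : lam < 1)
    -- ‖P_Ω P_T‖ ≤ 1/2
    (hop : ∀ X : Matrix (Fin n) (Fin n) ℝ,
      frobNorm (projSet (suppSet S0) (PT X)) ≤ (1 / 2) * frobNorm X)
    -- the dual certificate W
    (W : Matrix (Fin n) (Fin n) ℝ)
    (hW1 : PT W = 0) (hW2 : specNorm W < 1 / 2)
    (hW3 : frobNorm (projSet (suppSet S0) (U * Vᵀ - lam • sgnMat S0 + W)) ≤ lam / 4)
    (hW4 : linfNorm ((U * Vᵀ + W) - projSet (suppSet S0) (U * Vᵀ + W)) < lam / 2) :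
    ∀ L S : Matrix (Fin n) (Fin n) ℝ, L + S = L0 + S0 → (L, S) ≠ (L0, S0) →
      nuclearNorm L0 + lam * l1Norm S0 < nuclearNorm L + lam * l1Norm S :=
  stmt2_general L0 S0 U V σ hU hV hσ hSVD PT hPT lam hlam hop W hW1 hW2 hW3 hW4
end

section
/- Suppose ‖P_T P_Ω‖ ≤ 1/2. Then for any pair H of real n×n matrices, writing H^{Γ⊥} = P_{Γ⊥}(H) (so that P_Γ(H^{Γ⊥}) = 0), one has ‖(P_T × P_Ω)(H^{Γ⊥})‖_F² ≤ 4·‖(P_{T⊥} × P_{Ω⊥})(H^{Γ⊥})‖_F², and consequently ‖H^{Γ⊥}‖_F² ≤ 5·‖(P_{T⊥} × P_{Ω⊥})(H^{Γ⊥})‖_F². -/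
open Matrix BigOperators

open scoped Classical

/-!
Since `P_Γ (H^{Γ⊥}) = 0`, the pair `H^{Γ⊥}` has the form `(Q, -Q)`; put `a = P_T Q`, `b = P_Ω Q`.
As `a ∈ T` and `P_Ω b = b`, the operator bound gives `⟪a, b⟫ = ⟪a, P_T P_Ω b⟫ ≤ ½‖a‖‖b‖`, hence
`‖a‖² + ‖b‖² = ‖a - b‖² + 2⟪a, b⟫ ≤ ‖a - b‖² + ½(‖a‖² + ‖b‖²)`, while
`a - b = (Q - b) - (Q - a)` gives `‖a - b‖² ≤ 2(‖Q - a‖² + ‖Q - b‖²)`. Adding the two Pythagoras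
identities `‖Q‖² = ‖a‖² + ‖Q - a‖² = ‖b‖² + ‖Q - b‖²` yields the second bound.
-/

open scoped RealInnerProductSpace

section InnerProductSpace

variable {E : Type*} [NormedAddCommGroup E] [InnerProductSpace ℝ E] {q a b : E}

theorem norm_sq_add_norm_sq_le_of_inner_le_half (hab : ⟪a, b⟫ ≤ 1 / 2 * ‖a‖ * ‖b‖) :
    ‖a‖ ^ 2 + ‖b‖ ^ 2 ≤ 4 * (‖q - a‖ ^ 2 + ‖q - b‖ ^ 2) := by
  have hdist : ‖a - b‖ ≤ ‖q - a‖ + ‖q - b‖ := by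
    rw [show a - b = (q - b) - (q - a) by abel, add_comm]
    exact norm_sub_le _ _
  nlinarith [norm_sub_sq_real a b, norm_nonneg (a - b), sq_nonneg (‖a‖ - ‖b‖),
    sq_nonneg (‖q - a‖ - ‖q - b‖)]

theorem two_mul_norm_sq_le_of_inner_le_half (hqa : ⟪q - a, a⟫ = 0) (hqb : ⟪q - b, b⟫ = 0)
    (hab : ⟪a, b⟫ ≤ 1 / 2 * ‖a‖ * ‖b‖) :
    2 * ‖q‖ ^ 2 ≤ 5 * (‖q - a‖ ^ 2 + ‖q - b‖ ^ 2) := by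
  have hpyth {c : E} (hqc : ⟪q - c, c⟫ = 0) : ‖q‖ ^ 2 = ‖q - c‖ ^ 2 + ‖c‖ ^ 2 := by
    simpa only [sub_add_cancel, sq] using norm_add_sq_eq_norm_sq_add_norm_sq_real hqc
  linarith [hpyth hqa, hpyth hqb, norm_sq_add_norm_sq_le_of_inner_le_half (q := q) hab]

end InnerProductSpace

section Matrix

variable {m k : ℕ}

def frobVec : Matrix (Fin m) (Fin k) ℝ →ₗ[ℝ] EuclideanSpace ℝ (Fin m × Fin k) where
  toFun A := WithLp.toLp 2 (Function.uncurry A)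
  map_add' _ _ := rfl
  map_smul' _ _ := rfl

@[simp]
theorem frobVec_apply (A : Matrix (Fin m) (Fin k) ℝ) (p : Fin m × Fin k) :
    frobVec A p = A p.1 p.2 :=
  rfl

theorem norm_frobVec (A : Matrix (Fin m) (Fin k) ℝ) : ‖frobVec A‖ = frobNorm A := by
  simp [frobNorm, EuclideanSpace.norm_eq, Fintype.sum_prod_type]

theorem inner_frobVec (A B : Matrix (Fin m) (Fin k) ℝ) :
    ⟪frobVec A, frobVec B⟫ = finner A B := by
  simp [finner, PiLp.inner_apply, Fintype.sum_prod_type, mul_comm]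

end Matrix

section Projections

variable {n : ℕ}

theorem IsOrthProjOnto.finner_sub_apply_apply
    {P : Matrix (Fin n) (Fin n) ℝ →ₗ[ℝ] Matrix (Fin n) (Fin n) ℝ}
    {T : Set (Matrix (Fin n) (Fin n) ℝ)} (hP : IsOrthProjOnto P T)
    (X Y : Matrix (Fin n) (Fin n) ℝ) : finner (X - P X) (P Y) = 0 :=
  hP.2.2 X (P Y) (hP.1 Y)

variable (Ω : Set (Fin n × Fin n)) (A B : Matrix (Fin n) (Fin n) ℝ)

theorem projSet_projSet : projSet Ω (projSet Ω A) = projSet Ω A := by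
  funext i j
  by_cases h : (i, j) ∈ Ω <;> simp [projSet, h]

theorem projSet_neg : projSet Ω (-A) = -projSet Ω A := by
  funext i j
  by_cases h : (i, j) ∈ Ω <;> simp [projSet, h]

theorem finner_sub_projSet_projSet : finner (A - projSet Ω A) (projSet Ω B) = 0 := by
  refine Finset.sum_eq_zero fun i _ => Finset.sum_eq_zero fun j _ => ?_
  by_cases h : (i, j) ∈ Ω <;> simp [projSet, h]

theorem inner_frobVec_apply_projSet_le {T : Set (Matrix (Fin n) (Fin n) ℝ)}
    {P : Matrix (Fin n) (Fin n) ℝ →ₗ[ℝ] Matrix (Fin n) (Fin n) ℝ} (hP : IsOrthProjOnto P T)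
    (hop : ∀ X, frobNorm (P (projSet Ω X)) ≤ 1 / 2 * frobNorm X) :
    ⟪frobVec (P A), frobVec (projSet Ω A)⟫ ≤
      1 / 2 * ‖frobVec (P A)‖ * ‖frobVec (projSet Ω A)‖ := by
  set b := projSet Ω A
  have horth : ⟪frobVec (b - P b), frobVec (P A)⟫ = 0 := by
    rw [inner_frobVec]
    exact hP.finner_sub_apply_apply b A
  have hPb : ‖frobVec (P b)‖ ≤ 1 / 2 * ‖frobVec b‖ := by
    simpa only [norm_frobVec, b, projSet_projSet] using hop b
  calc ⟪frobVec (P A), frobVec b⟫ = ⟪frobVec (P A), frobVec (P b)⟫ := by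
        rw [map_sub, inner_sub_left, real_inner_comm (frobVec (P A)),
          real_inner_comm (frobVec (P A))] at horth
        linarith
    _ ≤ ‖frobVec (P A)‖ * ‖frobVec (P b)‖ := real_inner_le_norm _ _
    _ ≤ ‖frobVec (P A)‖ * (1 / 2 * ‖frobVec b‖) := by gcongr
    _ = 1 / 2 * ‖frobVec (P A)‖ * ‖frobVec b‖ := by ring

end Projections

theorem pairFrob_sq {n : ℕ} (X : Matrix (Fin n) (Fin n) ℝ × Matrix (Fin n) (Fin n) ℝ) :
    pairFrob X ^ 2 = frobNorm X.1 ^ 2 + frobNorm X.2 ^ 2 :=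
  Real.sq_sqrt (by positivity)

/-- If ‖P_T P_Ω‖ ≤ 1/2, then for any pair H, with H^{Γ⊥} = P_{Γ⊥}(H) = H − P_Γ(H),
‖(P_T × P_Ω)(H^{Γ⊥})‖_F² ≤ 4‖(P_{T⊥} × P_{Ω⊥})(H^{Γ⊥})‖_F², and consequently
‖H^{Γ⊥}‖_F² ≤ 5‖(P_{T⊥} × P_{Ω⊥})(H^{Γ⊥})‖_F². -/
theorem stmt9 {n : ℕ} (T : Submodule ℝ (Matrix (Fin n) (Fin n) ℝ))
    (PT : Matrix (Fin n) (Fin n) ℝ →ₗ[ℝ] Matrix (Fin n) (Fin n) ℝ)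
    (hPT : IsOrthProjOnto PT (T : Set (Matrix (Fin n) (Fin n) ℝ)))
    (Ω : Set (Fin n × Fin n))
    -- ‖P_T P_Ω‖ ≤ 1/2
    (hop : ∀ X : Matrix (Fin n) (Fin n) ℝ, frobNorm (PT (projSet Ω X)) ≤ (1 / 2) * frobNorm X)
    (H HΓp : Matrix (Fin n) (Fin n) ℝ × Matrix (Fin n) (Fin n) ℝ)
    (hHΓp : HΓp = H - projGamma H) :
    pairFrob (PT HΓp.1, projSet Ω HΓp.2) ^ 2 ≤
        4 * pairFrob (HΓp.1 - PT HΓp.1, HΓp.2 - projSet Ω HΓp.2) ^ 2 ∧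
      pairFrob HΓp ^ 2 ≤ 5 * pairFrob (HΓp.1 - PT HΓp.1, HΓp.2 - projSet Ω HΓp.2) ^ 2 := by
  obtain ⟨Q, S⟩ := HΓp
  obtain rfl : S = -Q := by
    obtain ⟨rfl, rfl⟩ := Prod.ext_iff.mp hHΓp
    simp only [projGamma, Prod.fst_sub, Prod.snd_sub]
    module
  have hab := inner_frobVec_apply_projSet_le Ω Q hPT hop
  have hqa : ⟪frobVec Q - frobVec (PT Q), frobVec (PT Q)⟫ = 0 := by
    rw [← map_sub, inner_frobVec]
    exact hPT.finner_sub_apply_apply Q Q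
  have hqb : ⟪frobVec Q - frobVec (projSet Ω Q), frobVec (projSet Ω Q)⟫ = 0 := by
    rw [← map_sub, inner_frobVec]
    exact finner_sub_projSet_projSet Ω Q Q
  have hproj := norm_sq_add_norm_sq_le_of_inner_le_half (q := frobVec Q) hab
  have hfull := two_mul_norm_sq_le_of_inner_le_half hqa hqb hab
  simp only [pairFrob_sq, projSet_neg, ← norm_frobVec, map_sub, map_neg, norm_neg, neg_sub_neg,
    norm_sub_rev (frobVec (projSet Ω Q))]
  constructor <;> linarith
end
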